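/- arXiv:math/0701681 — 2 statements merged into one kernel-verified Lean document; each statement's English description precedes it below -/
import Mathlib

section
/- Let H, K be Hilbert spaces, T : H → H a bounded self-adjoint operator, A : H → K a bounded operator, and c₀, c₁ > 0 with ⟪T v, v⟫ ≥ c₀ ‖v‖² + c₁ ‖A v‖² for all v ∈ H. Then T is invertible with bounded inverse and the composition A ∘ T⁻¹ satisfies ‖A ∘ T⁻¹‖ ≤ 1/√(c₀ c₁). -/
/-! A coercive operator is bounded below, `c₀ ‖v‖ ≤ ‖T v‖`, hence injective with closed range;
its range is also dense, since a vector `w` orthogonal to it has `c₀ ‖w‖² ≤ re ⟪T w, w⟫ = 0`.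
So `T` is a Banach isomorphism. For `u = T⁻¹ v` the coercivity estimate and Cauchy–Schwarz give
`c₁ ‖A u‖² ≤ re ⟪v, u⟫ ≤ ‖v‖ ‖u‖ ≤ ‖v‖² / c₀`. -/

open RCLike
open scoped InnerProductSpace

namespace ContinuousLinearMap

variable {𝕜 H : Type*} [RCLike 𝕜] [NormedAddCommGroup H] [InnerProductSpace 𝕜 H]
  {T : H →L[𝕜] H} {c : ℝ}

theorem mul_norm_le_norm_apply_of_coercive (hT : ∀ v, c * ‖v‖ ^ 2 ≤ re ⟪T v, v⟫_𝕜) (v : H) :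
    c * ‖v‖ ≤ ‖T v‖ := by
  rcases (norm_nonneg v).eq_or_lt with hv | hv
  · simp [← hv]
  refine le_of_mul_le_mul_right ?_ hv
  calc c * ‖v‖ * ‖v‖ = c * ‖v‖ ^ 2 := by ring
    _ ≤ re ⟪T v, v⟫_𝕜 := hT v
    _ ≤ ‖T v‖ * ‖v‖ := (re_le_norm _).trans (norm_inner_le_norm _ _)

theorem antilipschitz_of_coercive (hc : 0 < c) (hT : ∀ v, c * ‖v‖ ^ 2 ≤ re ⟪T v, v⟫_𝕜) :
    AntilipschitzWith (Real.toNNReal c)⁻¹ T :=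
  T.antilipschitz_of_bound fun v => by
    rw [NNReal.coe_inv, Real.coe_toNNReal _ hc.le, le_inv_mul_iff₀ hc]
    exact mul_norm_le_norm_apply_of_coercive hT v

theorem ker_eq_bot_of_coercive (hc : 0 < c) (hT : ∀ v, c * ‖v‖ ^ 2 ≤ re ⟪T v, v⟫_𝕜) :
    T.ker = ⊥ :=
  LinearMap.ker_eq_bot.mpr (antilipschitz_of_coercive hc hT).injective

theorem range_eq_top_of_coercive [CompleteSpace H] (hc : 0 < c)
    (hT : ∀ v, c * ‖v‖ ^ 2 ≤ re ⟪T v, v⟫_𝕜) : T.range = ⊤ := by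
  have hclosed : IsClosed (T.range : Set H) := by
    rw [LinearMap.coe_range]
    exact (antilipschitz_of_coercive hc hT).isClosed_range T.uniformContinuous
  have := hclosed.completeSpace_coe
  rw [← Submodule.orthogonal_eq_bot_iff, Submodule.eq_bot_iff]
  intro w hw
  have hTw : ⟪T w, w⟫_𝕜 = 0 := hw (T w) (LinearMap.mem_range_self _ w)
  have : c * ‖w‖ ^ 2 ≤ 0 := by simpa [hTw] using hT w
  exact norm_eq_zero.mp (pow_eq_zero_iff two_ne_zero |>.mp
    (le_antisymm (nonpos_of_mul_nonpos_right this hc) (sq_nonneg _)))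

section

variable {K : Type*} [NormedAddCommGroup K] [InnerProductSpace 𝕜 K] {A : H →L[𝕜] K} {c₀ c₁ : ℝ}

theorem mul_norm_sq_le_re_inner_of_coercive (hc₁ : 0 ≤ c₁)
    (hcoer : ∀ v, c₀ * ‖v‖ ^ 2 + c₁ * ‖A v‖ ^ 2 ≤ re ⟪T v, v⟫_𝕜) (v : H) :
    c₀ * ‖v‖ ^ 2 ≤ re ⟪T v, v⟫_𝕜 :=
  (le_add_of_nonneg_right (by positivity)).trans (hcoer v)

theorem mul_mul_norm_sq_le_norm_sq_of_coercive (hc₀ : 0 ≤ c₀) (hc₁ : 0 ≤ c₁)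
    (hcoer : ∀ v, c₀ * ‖v‖ ^ 2 + c₁ * ‖A v‖ ^ 2 ≤ re ⟪T v, v⟫_𝕜) (u : H) :
    c₀ * c₁ * ‖A u‖ ^ 2 ≤ ‖T u‖ ^ 2 := by
  have hA : c₁ * ‖A u‖ ^ 2 ≤ ‖T u‖ * ‖u‖ :=
    calc c₁ * ‖A u‖ ^ 2 ≤ c₀ * ‖u‖ ^ 2 + c₁ * ‖A u‖ ^ 2 := le_add_of_nonneg_left (by positivity)
      _ ≤ re ⟪T u, u⟫_𝕜 := hcoer u
      _ ≤ ‖T u‖ * ‖u‖ := (re_le_norm _).trans (norm_inner_le_norm _ _)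
  calc c₀ * c₁ * ‖A u‖ ^ 2 = c₀ * (c₁ * ‖A u‖ ^ 2) := mul_assoc _ _ _
    _ ≤ c₀ * (‖T u‖ * ‖u‖) := mul_le_mul_of_nonneg_left hA hc₀
    _ = ‖T u‖ * (c₀ * ‖u‖) := by ring
    _ ≤ ‖T u‖ * ‖T u‖ :=
      mul_le_mul_of_nonneg_left (mul_norm_le_norm_apply_of_coercive
        (mul_norm_sq_le_re_inner_of_coercive hc₁ hcoer) u) (norm_nonneg _)
    _ = ‖T u‖ ^ 2 := (sq _).symm

end

theorem opNorm_le_one_div_sqrt {E F : Type*} [SeminormedAddCommGroup E] [SeminormedAddCommGroup F]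
    [NormedSpace 𝕜 E] [NormedSpace 𝕜 F] {B : E →L[𝕜] F} (hc : 0 < c)
    (hB : ∀ v, c * ‖B v‖ ^ 2 ≤ ‖v‖ ^ 2) : ‖B‖ ≤ 1 / √c := by
  have hsqrt : 0 < √c := Real.sqrt_pos.mpr hc
  refine B.opNorm_le_bound (by positivity) fun v => ?_
  rw [one_div_mul_eq_div, le_div_iff₀ hsqrt,
    ← pow_le_pow_iff_left₀ (by positivity) (norm_nonneg v) two_ne_zero, mul_pow,
    Real.sq_sqrt hc.le, mul_comm]
  exact hB v

end ContinuousLinearMap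

open ContinuousLinearMap in
theorem coercive_selfAdjoint_comp_inverse_general
    {𝕜 : Type*} [RCLike 𝕜] {H K : Type*} [NormedAddCommGroup H]
    [InnerProductSpace 𝕜 H] [CompleteSpace H]
    [NormedAddCommGroup K] [InnerProductSpace 𝕜 K] [CompleteSpace K]
    (T : H →L[𝕜] H) (A : H →L[𝕜] K)
    (c₀ c₁ : ℝ) (hc₀ : 0 < c₀) (hc₁ : 0 < c₁)
    (hcoer : ∀ v : H,
      c₀ * ‖v‖ ^ 2 + c₁ * ‖A v‖ ^ 2 ≤ RCLike.re (inner 𝕜 (T v) v : 𝕜)) :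
    ∃ S : H →L[𝕜] H, (∀ v, T (S v) = v) ∧ (∀ v, S (T v) = v) ∧
      ‖A.comp S‖ ≤ 1 / Real.sqrt (c₀ * c₁) := by
  have hT₀ := mul_norm_sq_le_re_inner_of_coercive hc₁.le hcoer
  let e := ContinuousLinearEquiv.ofBijective T (ker_eq_bot_of_coercive hc₀ hT₀)
    (range_eq_top_of_coercive hc₀ hT₀)
  refine ⟨e.symm, e.apply_symm_apply, e.symm_apply_apply,
    opNorm_le_one_div_sqrt (by positivity) fun v => ?_⟩
  have hv : T (e.symm v) = v := e.apply_symm_apply v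
  have hAv := mul_mul_norm_sq_le_norm_sq_of_coercive hc₀.le hc₁.le hcoer (e.symm v)
  rwa [hv] at hAv

theorem coercive_selfAdjoint_comp_inverse
    {𝕜 : Type*} [RCLike 𝕜] {H K : Type*} [NormedAddCommGroup H]
    [InnerProductSpace 𝕜 H] [CompleteSpace H]
    [NormedAddCommGroup K] [InnerProductSpace 𝕜 K] [CompleteSpace K]
    (T : H →L[𝕜] H) (hT : IsSelfAdjoint T) (A : H →L[𝕜] K)
    (c₀ c₁ : ℝ) (hc₀ : 0 < c₀) (hc₁ : 0 < c₁)
    (hcoer : ∀ v : H,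
      c₀ * ‖v‖ ^ 2 + c₁ * ‖A v‖ ^ 2 ≤ RCLike.re (inner 𝕜 (T v) v : 𝕜)) :
    ∃ S : H →L[𝕜] H, (∀ v, T (S v) = v) ∧ (∀ v, S (T v) = v) ∧
      ‖A.comp S‖ ≤ 1 / Real.sqrt (c₀ * c₁) :=
  coercive_selfAdjoint_comp_inverse_general T A c₀ c₁ hc₀ hc₁ hcoer
end

section
/- Let δ > 0, q > 0, D > 0 and set α := δ + √(2δ(δ+q)). Suppose P > δ + (D/q)(√δ + √(2(δ+q)))² and let μ := 1 − D/(P−δ). Then there exists r with 1 < r < 2μq/(q + α(1−μ)) and δ − α(r−1) < 0. -/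
theorem exists_r_nash_moser (δ q D P : ℝ) (hδ : 0 < δ) (hq : 0 < q)
    (hD : 0 < D)
    (hP : P > δ + (D / q) * (Real.sqrt δ + Real.sqrt (2 * (δ + q))) ^ 2) :
    let α := δ + Real.sqrt (2 * δ * (δ + q))
    let μ := 1 - D / (P - δ)
    ∃ r : ℝ, 1 < r ∧ r < 2 * μ * q / (q + α * (1 - μ)) ∧
      δ - α * (r - 1) < 0 := by
  intro α μ
  set a := Real.sqrt δ with haa
  set b := Real.sqrt (2 * (δ + q)) with hbb
  have ha0 : 0 < a := Real.sqrt_pos.mpr hδ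
  have hb0 : 0 < b := Real.sqrt_pos.mpr (by linarith)
  have ha2 : a ^ 2 = δ := Real.sq_sqrt hδ.le
  have hb2 : b ^ 2 = 2 * (δ + q) := Real.sq_sqrt (by linarith)
  have hαab : α = a ^ 2 + a * b := by
    have : Real.sqrt (2 * δ * (δ + q)) = a * b := by
      rw [show 2 * δ * (δ + q) = δ * (2 * (δ + q)) by ring, Real.sqrt_mul hδ.le]
    simp only [α, this, ha2]
  have hα0 : 0 < α := by nlinarith [mul_pos ha0 hb0]
  -- P - δ is large
  have hPδ : (D / q) * (a + b) ^ 2 < P - δ := by linarith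
  have hPδ0 : 0 < P - δ := by
    have : 0 < (D / q) * (a + b) ^ 2 := by positivity
    linarith
  set t := D / (P - δ) with htdef
  have hμt : 1 - μ = t := by simp [μ, htdef]
  have ht0 : 0 < t := div_pos hD hPδ0
  have ht : t * (a + b) ^ 2 < q := by
    rw [htdef, div_mul_eq_mul_div, div_lt_iff₀ hPδ0]
    have := mul_lt_mul_of_pos_left hPδ hq
    have hq' : q * ((D / q) * (a + b) ^ 2) = D * (a + b) ^ 2 := by
      field_simp
    nlinarith
  have hd0 : 0 < q + α * t := by nlinarith
  -- key inequality: 1 + δ/α < 2*(1-t)*q/(q + α*t)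
  have hkey : 1 + δ / α < 2 * (1 - t) * q / (q + α * t) := by
    rw [show (1 : ℝ) + δ / α = (α + δ) / α by field_simp,
      div_lt_div_iff₀ hα0 hd0]
    -- (α+δ)*(q+α*t) < 2*(1-t)*q*α
    have key : 2 * (1 - t) * q * α - (α + δ) * (q + α * t)
        = a * b * (q - t * (a + b) ^ 2) := by
      have h2q : q = (b ^ 2 - 2 * a ^ 2) / 2 := by
        nlinarith
      rw [hαab, ← ha2, h2q]; ring
    nlinarith [mul_pos ha0 hb0, mul_lt_mul_of_pos_left ht (mul_pos ha0 hb0)]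
  have hδα : 0 < δ / α := div_pos hδ hα0
  refine ⟨(1 + δ / α + 2 * (1 - t) * q / (q + α * t)) / 2, by linarith, ?_, ?_⟩
  · rw [hμt]
    linarith
  · have h1 : δ / α < (1 + δ / α + 2 * (1 - t) * q / (q + α * t)) / 2 - 1 := by
      linarith
    have h2 := mul_lt_mul_of_pos_left h1 hα0
    rw [mul_div_cancel₀ δ hα0.ne'] at h2
    linarith
end
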